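/- arXiv:1508.04400 — 8 statements merged into one kernel-verified Lean document; each statement's English description precedes it below -/
import Mathlib

section
/- Let F be a free group and let R, S be normal subgroups of F. Then the subgroup [R'∩S', R∩S]·[R'∩S, R'∩S]·[R∩S', R∩S'] of F is contained in F ∩ (1 + 𝔯𝔣𝔰), i.e., for every element w of this product of commutator subgroups, w − 1 lies in the ideal 𝔯𝔣𝔰 of ℤ[F]. -/
/-!
Since `⁅a, b⁆ - 1 = ((a - 1)(b - 1) - (b - 1)(a - 1)) (ba)⁻¹` in `ℤ[F]`, a commutator `⁅a, b⁆`
lies in `1 + 𝔞` for a two-sided ideal `𝔞` as soon as both products `(a - 1)(b - 1)` and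
`(b - 1)(a - 1)` lie in `𝔞`. Applied to `𝔤` this gives `G' ⊆ 1 + 𝔤𝔤`, hence
`R' ⊆ 1 + 𝔯𝔣` and `S' ⊆ 1 + 𝔣𝔰`. In each of the three commutator subgroups one factor is taken
from `R'` or `R` and the other from `S` or `S'` in both orders, so both products land in `𝔯𝔣𝔰`;
and `F ∩ (1 + 𝔯𝔣𝔰)` is a subgroup.
-/

open MonoidAlgebra

/-- For a subgroup `G` of `F`, the two-sided ideal of the integral group ring `ℤ[F]`
generated by `{g - 1 : g ∈ G}`, realized as the `ℤ`-span of `{f₁ (g-1) f₂}`. -/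
noncomputable def relIdeal (F : Type) [Group F] (G : Subgroup F) : Submodule ℤ (MonoidAlgebra ℤ F) :=
  Submodule.span ℤ {x | ∃ f₁ f₂ : F, ∃ g ∈ G, x = of ℤ F f₁ * (of ℤ F g - 1) * of ℤ F f₂}

open scoped commutatorElement

section RelIdeal

variable {F : Type} [Group F]

lemma of_sub_one_mem_relIdeal {G : Subgroup F} {g : F} (hg : g ∈ G) :
    of ℤ F g - 1 ∈ relIdeal F G :=
  Submodule.subset_span ⟨1, 1, g, hg, by rw [map_one, one_mul, mul_one]⟩

lemma relIdeal_mono {G H : Subgroup F} (h : G ≤ H) : relIdeal F G ≤ relIdeal F H :=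
  Submodule.span_mono fun _ ⟨f₁, f₂, g, hg, hx⟩ => ⟨f₁, f₂, g, h hg, hx⟩

lemma top_mul_relIdeal_le (G : Subgroup F) : ⊤ * relIdeal F G ≤ relIdeal F G := by
  refine Submodule.mul_le.mpr ?_
  rintro m - n hn
  induction m using MonoidAlgebra.induction_on with
  | of f =>
    induction hn using Submodule.span_induction with
    | mem y hy =>
      obtain ⟨f₁, f₂, g, hg, rfl⟩ := hy
      exact Submodule.subset_span ⟨f * f₁, f₂, g, hg, by rw [map_mul]; noncomm_ring⟩
    | zero => simp
    | add y z _ _ hy hz => rw [mul_add]; exact add_mem hy hz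
    | smul c y _ hy => rw [mul_smul_comm]; exact Submodule.smul_mem _ c hy
  | add x y hx hy => rw [add_mul]; exact add_mem hx hy
  | smul r x hx => rw [smul_mul_assoc]; exact Submodule.smul_mem _ r hx

lemma relIdeal_mul_top_le (G : Subgroup F) : relIdeal F G * ⊤ ≤ relIdeal F G := by
  refine Submodule.mul_le.mpr ?_
  rintro n hn m -
  induction m using MonoidAlgebra.induction_on with
  | of f =>
    induction hn using Submodule.span_induction with
    | mem y hy =>
      obtain ⟨f₁, f₂, g, hg, rfl⟩ := hy
      exact Submodule.subset_span ⟨f₁, f₂ * f, g, hg, by rw [map_mul]; noncomm_ring⟩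
    | zero => simp
    | add y z _ _ hy hz => rw [add_mul]; exact add_mem hy hz
    | smul c y _ hy => rw [smul_mul_assoc]; exact Submodule.smul_mem _ c hy
  | add x y hx hy => rw [mul_add]; exact add_mem hx hy
  | smul r x hx => rw [mul_smul_comm]; exact Submodule.smul_mem _ r hx

end RelIdeal

section SubgroupOneAdd

variable {F : Type} [Group F] {I J : Submodule ℤ (MonoidAlgebra ℤ F)}

lemma top_mul_mul_le (h : ⊤ * I ≤ I) : ⊤ * (I * J) ≤ I * J := by
  rw [← mul_assoc]
  exact mul_le_mul' h le_rfl

lemma mul_mul_top_le (h : J * ⊤ ≤ J) : I * J * ⊤ ≤ I * J := by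
  rw [mul_assoc]
  exact mul_le_mul' le_rfl h

/-- The subgroup `F ∩ (1 + I)` of a left ideal `I` of `ℤ[F]`. -/
def subgroupOneAdd (I : Submodule ℤ (MonoidAlgebra ℤ F)) (hI : ⊤ * I ≤ I) : Subgroup F where
  carrier := {w | of ℤ F w - 1 ∈ I}
  one_mem' := by
    change of ℤ F 1 - 1 ∈ I
    rw [map_one, sub_self]
    exact zero_mem I
  mul_mem' {x y} hx hy := by
    have h : of ℤ F (x * y) - 1 = of ℤ F x * (of ℤ F y - 1) + (of ℤ F x - 1) := by
      rw [map_mul]; noncomm_ring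
    change of ℤ F (x * y) - 1 ∈ I
    rw [h]
    exact add_mem (hI (Submodule.mul_mem_mul Submodule.mem_top hy)) hx
  inv_mem' {x} hx := by
    have h : of ℤ F x⁻¹ - 1 = -(of ℤ F x⁻¹ * (of ℤ F x - 1)) := by
      rw [mul_sub, ← map_mul, inv_mul_cancel, map_one]; noncomm_ring
    change of ℤ F x⁻¹ - 1 ∈ I
    rw [h]
    exact neg_mem (hI (Submodule.mul_mem_mul Submodule.mem_top hx))

lemma of_commutator_sub_one (a b : F) :
    of ℤ F ⁅a, b⁆ - 1 =
      ((of ℤ F a - 1) * (of ℤ F b - 1) - (of ℤ F b - 1) * (of ℤ F a - 1)) *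
        of ℤ F (b * a)⁻¹ := by
  have hba : of ℤ F (b * a) * of ℤ F (b * a)⁻¹ = 1 := by
    rw [← map_mul, mul_inv_cancel, map_one]
  have hab : of ℤ F (a * b) * of ℤ F (b * a)⁻¹ = of ℤ F ⁅a, b⁆ := by
    rw [← map_mul, commutatorElement_def]; group
  calc of ℤ F ⁅a, b⁆ - 1
      = (of ℤ F (a * b) - of ℤ F (b * a)) * of ℤ F (b * a)⁻¹ := by rw [sub_mul, hab, hba]
    _ = _ := by rw [map_mul, map_mul]; noncomm_ring

lemma commutator_le_subgroupOneAdd (hl : ⊤ * I ≤ I) (hr : I * ⊤ ≤ I) {A B : Subgroup F}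
    (hAB : ∀ a ∈ A, ∀ b ∈ B, (of ℤ F a - 1) * (of ℤ F b - 1) ∈ I)
    (hBA : ∀ a ∈ A, ∀ b ∈ B, (of ℤ F b - 1) * (of ℤ F a - 1) ∈ I) :
    ⁅A, B⁆ ≤ subgroupOneAdd I hl := by
  rw [Subgroup.commutator_le]
  intro a ha b hb
  change of ℤ F ⁅a, b⁆ - 1 ∈ I
  rw [of_commutator_sub_one]
  exact hr (Submodule.mul_mem_mul (sub_mem (hAB a ha b hb) (hBA a ha b hb)) Submodule.mem_top)

lemma of_sub_one_mem_relIdeal_mul_relIdeal {G : Subgroup F} {w : F} (hw : w ∈ ⁅G, G⁆) :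
    of ℤ F w - 1 ∈ relIdeal F G * relIdeal F G :=
  commutator_le_subgroupOneAdd (top_mul_mul_le (top_mul_relIdeal_le G))
    (mul_mul_top_le (relIdeal_mul_top_le G))
    (fun _ ha _ hb =>
      Submodule.mul_mem_mul (of_sub_one_mem_relIdeal ha) (of_sub_one_mem_relIdeal hb))
    (fun _ ha _ hb =>
      Submodule.mul_mem_mul (of_sub_one_mem_relIdeal hb) (of_sub_one_mem_relIdeal ha))
    hw

end SubgroupOneAdd

theorem stmt0_general (F : Type) [Group F] (R S : Subgroup F) (w : F)
    (hw : w ∈ ⁅⁅R, R⁆ ⊓ ⁅S, S⁆, R ⊓ S⁆ ⊔ ⁅⁅R, R⁆ ⊓ S, ⁅R, R⁆ ⊓ S⁆ ⊔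
      ⁅R ⊓ ⁅S, S⁆, R ⊓ ⁅S, S⁆⁆) :
    of ℤ F w - 1 ∈ relIdeal F R * relIdeal F ⊤ * relIdeal F S := by
  have hl : ⊤ * (relIdeal F R * relIdeal F ⊤ * relIdeal F S) ≤ _ :=
    top_mul_mul_le (top_mul_mul_le (top_mul_relIdeal_le R))
  have hr : relIdeal F R * relIdeal F ⊤ * relIdeal F S * ⊤ ≤ _ :=
    mul_mul_top_le (relIdeal_mul_top_le S)
  have hR' {a b : F} (ha : a ∈ ⁅R, R⁆) (hb : b ∈ S) :
      (of ℤ F a - 1) * (of ℤ F b - 1) ∈ relIdeal F R * relIdeal F ⊤ * relIdeal F S :=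
    Submodule.mul_mem_mul (mul_le_mul' le_rfl (relIdeal_mono le_top)
      (of_sub_one_mem_relIdeal_mul_relIdeal ha)) (of_sub_one_mem_relIdeal hb)
  have hS' {a b : F} (ha : a ∈ R) (hb : b ∈ ⁅S, S⁆) :
      (of ℤ F a - 1) * (of ℤ F b - 1) ∈ relIdeal F R * relIdeal F ⊤ * relIdeal F S := by
    rw [mul_assoc]
    exact Submodule.mul_mem_mul (of_sub_one_mem_relIdeal ha) (mul_le_mul'
      (relIdeal_mono le_top) le_rfl (of_sub_one_mem_relIdeal_mul_relIdeal hb))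
  refine (sup_le (sup_le ?_ ?_) ?_ : _ ≤ subgroupOneAdd _ hl) hw
  · exact commutator_le_subgroupOneAdd hl hr (fun _ ha _ hb => hR' ha.1 hb.2)
      (fun _ ha _ hb => hS' hb.1 ha.2)
  · exact commutator_le_subgroupOneAdd hl hr (fun _ ha _ hb => hR' ha.1 hb.2)
      (fun _ ha _ hb => hR' hb.1 ha.2)
  · exact commutator_le_subgroupOneAdd hl hr (fun _ ha _ hb => hS' ha.1 hb.2)
      (fun _ ha _ hb => hS' hb.1 ha.2)

theorem stmt0 (F : Type) [Group F] [IsFreeGroup F] (R S : Subgroup F)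
    [R.Normal] [S.Normal] (w : F)
    (hw : w ∈ ⁅⁅R, R⁆ ⊓ ⁅S, S⁆, R ⊓ S⁆ ⊔ ⁅⁅R, R⁆ ⊓ S, ⁅R, R⁆ ⊓ S⁆ ⊔
      ⁅R ⊓ ⁅S, S⁆, R ⊓ ⁅S, S⁆⁆) :
    of ℤ F w - 1 ∈ relIdeal F R * relIdeal F ⊤ * relIdeal F S :=
  stmt0_general F R S w hw
end

section
/- Let F be a free group and R, S normal subgroups of F. Then the abelian group (R∩S)/(R'∩S') is free abelian. -/
/-!
By Nielsen–Schreier, `R` and `S` are free, so `R/R' × S/S'` is free abelian, and the two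
abelianization maps embed `(R ∩ S)/(R' ∩ S')` into it. It remains to see that a subgroup of a
free abelian group is free abelian. Over a principal ideal ring, a submodule `N` of `ι →₀ R` with
`ι` well ordered has a basis in echelon form: for each `i` pick a pivot in `N` supported on
`Iic i` whose `i`-th coordinate generates the ideal of all such coordinates; the nonzero pivots
span `N` by well-founded induction on the largest index in the support.
-/

open Finsupp Set

namespace Submodule

variable {R ι : Type*} [CommRing R] [IsPrincipalIdealRing R] [LinearOrder ι]
  (N : Submodule R (ι →₀ R))

noncomputable def leadingCoeffIdeal (i : ι) : Ideal R :=
  (N ⊓ supported R R (Iic i)).map (lapply i)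

theorem exists_mem_supported_apply_eq_generator (i : ι) :
    ∃ y ∈ N ⊓ supported R R (Iic i), y i = IsPrincipal.generator (N.leadingCoeffIdeal i) :=
  mem_map.mp (IsPrincipal.generator_mem (N.leadingCoeffIdeal i))

noncomputable def pivot (i : ι) : ι →₀ R :=
  (N.exists_mem_supported_apply_eq_generator i).choose

theorem pivot_mem (i : ι) : N.pivot i ∈ N :=
  (N.exists_mem_supported_apply_eq_generator i).choose_spec.1.1

theorem pivot_apply_of_lt {i j : ι} (h : i < j) : N.pivot i j = 0 :=
  (mem_supported' _ _).mp (N.exists_mem_supported_apply_eq_generator i).choose_spec.1.2 j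
    (not_le.mpr h)

theorem pivot_apply_self (i : ι) :
    N.pivot i i = IsPrincipal.generator (N.leadingCoeffIdeal i) :=
  (N.exists_mem_supported_apply_eq_generator i).choose_spec.2

def pivotIndex : Set ι := {i | N.pivot i i ≠ 0}

noncomputable def pivotFamily (i : N.pivotIndex) : N := ⟨N.pivot i, N.pivot_mem i⟩

theorem linearIndependent_pivotFamily [NoZeroDivisors R] : LinearIndependent R N.pivotFamily := by
  refine LinearIndependent.of_comp N.subtype (linearIndependent_iff.mpr fun l hl => ?_)
  by_contra hl0
  have hne : l.support.Nonempty := support_nonempty_iff.mpr hl0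
  set i := l.support.max' hne
  have htop : (linearCombination R (N.subtype ∘ N.pivotFamily) l) i = l i * N.pivot i i := by
    rw [linearCombination_apply, Finsupp.sum, finsetSum_apply, Finset.sum_eq_single i]
    · rfl
    · intro j hj hj_ne
      have hj_lt : (j : ι) < i :=
        lt_of_le_of_ne (l.support.le_max' j hj) (Subtype.coe_ne_coe.mpr hj_ne)
      simp [pivotFamily, N.pivot_apply_of_lt hj_lt]
    · exact fun h => absurd (l.support.max'_mem hne) h
  rw [hl, Finsupp.zero_apply, eq_comm] at htop
  rcases mul_eq_zero.mp htop with h | h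
  · exact mem_support_iff.mp (l.support.max'_mem hne) h
  · exact i.2 h

variable [WellFoundedLT ι]

theorem mem_span_pivotFamily_of_support_max_eq (m : WithBot ι) :
    ∀ x ∈ N, x.support.max = m → x ∈ span R (range (N.subtype ∘ N.pivotFamily)) := by
  induction m using WellFoundedLT.induction with
  | _ m ih =>
  intro x hxN hm
  cases m with
  | bot =>
    rw [Finset.max_eq_bot, support_eq_empty] at hm
    exact hm ▸ zero_mem _
  | coe i =>
    have hxi : x i ≠ 0 := mem_support_iff.mp (Finset.mem_of_max hm)
    have hx : x ∈ supported R R (Iic i) := fun j hj => Finset.le_max_of_eq hj hm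
    obtain ⟨c, hc⟩ : ∃ c, c * N.pivot i i = x i := by
      rw [← Ideal.mem_span_singleton', pivot_apply_self, Ideal.span_singleton_generator]
      exact mem_map_of_mem (mem_inf.mpr ⟨hxN, hx⟩)
    have hpivot : N.pivot i ∈ range (N.subtype ∘ N.pivotFamily) :=
      ⟨⟨i, fun h => hxi (by rw [← hc, h, mul_zero])⟩, rfl⟩
    have hlt : (x - c • N.pivot i).support.max < i := by
      refine (Finset.sup_lt_iff (WithBot.bot_lt_coe i)).mpr fun j hj => WithBot.coe_lt_coe.mpr ?_
      rw [mem_support_iff] at hj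
      refine lt_of_le_of_ne (not_lt.mp fun hij => hj ?_) ?_
      · simp [(mem_supported' _ _).mp hx j (not_le.mpr hij), N.pivot_apply_of_lt hij]
      · rintro rfl
        exact hj (by simp [← hc])
    rw [← sub_add_cancel x (c • N.pivot i)]
    exact add_mem (ih _ hlt _ (sub_mem hxN (smul_mem _ c (N.pivot_mem i))) rfl)
      (smul_mem _ c (subset_span hpivot))

theorem free_of_finsupp [NoZeroDivisors R] : Module.Free R N := by
  refine Module.Free.of_basis (Module.Basis.mk N.linearIndependent_pivotFamily ?_)
  rintro ⟨x, hx⟩ -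
  have hspan := N.mem_span_pivotFamily_of_support_max_eq _ x hx rfl
  rw [range_comp, ← map_span] at hspan
  rw [← comap_map_eq_of_injective N.injective_subtype (span R _)]
  exact hspan

end Submodule

theorem Submodule.free_of_free {R M : Type*} [CommRing R] [IsPrincipalIdealRing R]
    [NoZeroDivisors R] [AddCommGroup M] [Module R M] [Module.Free R M] (N : Submodule R M) :
    Module.Free R N := by
  let b := Module.Free.chooseBasis R M
  let _ : LinearOrder (Module.Free.ChooseBasisIndex R M) := IsWellOrder.linearOrder WellOrderingRel
  have : WellFoundedLT (Module.Free.ChooseBasisIndex R M) :=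
    ⟨IsWellFounded.wf (r := WellOrderingRel)⟩
  have := (N.map b.repr.toLinearMap).free_of_finsupp
  exact Module.Free.of_equiv (N.equivMapOfInjective _ b.repr.injective).symm

theorem Subgroup.exists_mulEquiv_freeAbelianGroup {P : Type} [CommGroup P]
    [Module.Free ℤ (Additive P)] (H : Subgroup P) :
    ∃ ι : Type, Nonempty (H ≃* Multiplicative (FreeAbelianGroup ι)) := by
  let M := H.toAddSubgroup.toIntSubmodule
  have := M.free_of_free
  let b := Module.Free.chooseBasis ℤ M
  exact ⟨_, ⟨AddEquiv.toMultiplicative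
    (b.repr.toAddEquiv.trans (FreeAbelianGroup.equivFinsupp _).symm)⟩⟩

instance {G : Type*} [Group G] [IsFreeGroup G] : Module.Free ℤ (Additive (Abelianization G)) :=
  Module.Free.of_equiv (AddEquiv.toIntLinearEquiv (M := FreeAbelianGroup (IsFreeGroup.Generators G))
    (MulEquiv.toAdditive (IsFreeGroup.toFreeGroup G).abelianizationCongr.symm))

instance {A B : Type*} [CommGroup A] [CommGroup B] [Module.Free ℤ (Additive A)]
    [Module.Free ℤ (Additive B)] : Module.Free ℤ (Additive (A × B)) :=
  Module.Free.of_equiv (AddEquiv.toIntLinearEquiv (AddEquiv.prodAdditive (G := A) (H := B)).symm)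

theorem Abelianization.of_eq_one_iff_mem_commutator {G : Type*} [Group G] {H : Subgroup G}
    (x : H) : Abelianization.of x = 1 ↔ (x : G) ∈ ⁅H, H⁆ := by
  rw [← H.map_subtype_commutator]
  exact (QuotientGroup.eq_one_iff x).trans (Subgroup.mem_map_iff_mem H.subtype_injective).symm

def Subgroup.infToAbelianizationProd {G : Type*} [Group G] (R S : Subgroup G) :
    ↥(R ⊓ S) →* Abelianization R × Abelianization S :=
  (Abelianization.of.comp (Subgroup.inclusion inf_le_left)).prod
    (Abelianization.of.comp (Subgroup.inclusion inf_le_right))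

theorem Subgroup.ker_infToAbelianizationProd {G : Type*} [Group G] (R S : Subgroup G) :
    (R.infToAbelianizationProd S).ker = (⁅R, R⁆ ⊓ ⁅S, S⁆).subgroupOf (R ⊓ S) := by
  ext x
  simp only [MonoidHom.mem_ker, mem_subgroupOf, mem_inf, infToAbelianizationProd,
    MonoidHom.prod_apply, Prod.mk_eq_one, MonoidHom.comp_apply]
  exact and_congr (Abelianization.of_eq_one_iff_mem_commutator _)
    (Abelianization.of_eq_one_iff_mem_commutator _)

theorem stmt6 (F : Type) [Group F] [IsFreeGroup F] (R S : Subgroup F)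
    [R.Normal] [S.Normal] :
    ∃ ι : Type, Nonempty
      ((↥(R ⊓ S) ⧸ ((⁅R, R⁆ ⊓ ⁅S, S⁆).subgroupOf (R ⊓ S))) ≃*
        Multiplicative (FreeAbelianGroup ι)) := by
  obtain ⟨ι, ⟨e⟩⟩ := (R.infToAbelianizationProd S).range.exists_mulEquiv_freeAbelianGroup
  exact ⟨ι, ⟨(QuotientGroup.quotientMulEquivOfEq (R.ker_infToAbelianizationProd S).symm).trans
    ((QuotientGroup.quotientKerEquivRange _).trans e)⟩⟩
end

section
/- Let Q be a free abelian group and U a subgroup of Q such that Q/U is free abelian. Then the sequence 0 → Λ²(Q)/Λ²(U) → (Q/U) ⊗_ℤ Q → SP²(Q/U) → 0 is exact, where the first map is induced by x∧y ↦ (x+U)⊗y − (y+U)⊗x (which annihilates the image of Λ²(U)), and the second map sends (x+U)⊗y to the product (x+U)·(y+U) in the symmetric square SP²(Q/U). -/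
/-
Exactness in the middle is right exactness of `(Q/U) ⊗ -` on `0 → U → Q → Q/U → 0`: the kernel of
`(Q/U) ⊗ Q → (Q/U) ⊗ (Q/U)` is spanned by the `b ⊗ u = f (x ∧ u)` with `x` a lift of `b`, and the
relations `a ⊗ c - c ⊗ a` of `SP²(Q/U)` are the images of the `f (x ∧ y)`.

Injectivity of `f` uses that `Q/U` is free. Choose a section `s` of `Q → Q/U` and a bilinear form
`σ` on `Q/U` with `σ a c - σ c a = s a ∧ s c` (order a basis and keep the strictly upper triangular
part). Then `b ⊗ q ↦ s b ∧ q + σ q̄ b` is a left inverse of `f`, because `x - s x̄` and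
`y - s ȳ` lie in `U`.
-/

open TensorProduct

/-- The relations defining the exterior square of an abelian group `A`:
the span of the elements `a ⊗ a`. -/
noncomputable def lam2Rel (A : Type) [AddCommGroup A] [Module ℤ A] :
    Submodule ℤ (A ⊗[ℤ] A) :=
  Submodule.span ℤ {x | ∃ a : A, x = a ⊗ₜ[ℤ] a}

/-- The exterior square `Λ²(A)` of an abelian group `A`. -/
abbrev Lam2 (A : Type) [AddCommGroup A] [Module ℤ A] := (A ⊗[ℤ] A) ⧸ lam2Rel A

/-- The relations defining the symmetric square of an abelian group `A`:
the span of the elements `a ⊗ b - b ⊗ a`. -/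
noncomputable def sp2Rel (A : Type) [AddCommGroup A] [Module ℤ A] :
    Submodule ℤ (A ⊗[ℤ] A) :=
  Submodule.span ℤ {x | ∃ a b : A, x = a ⊗ₜ[ℤ] b - b ⊗ₜ[ℤ] a}

/-- The symmetric square `SP²(A)` of an abelian group `A`. -/
abbrev SP2 (A : Type) [AddCommGroup A] [Module ℤ A] := (A ⊗[ℤ] A) ⧸ sp2Rel A

/-- For a subgroup `U` of `Q`, the image `Λ²(U)` of the natural map `Λ²(U) → Λ²(Q)`. -/
noncomputable def lam2Im {Q : Type} [AddCommGroup Q] [Module ℤ Q] (U : Submodule ℤ Q) :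
    Submodule ℤ (Lam2 Q) :=
  Submodule.map (lam2Rel Q).mkQ
    (Submodule.span ℤ {x | ∃ u ∈ U, ∃ v ∈ U, x = u ⊗ₜ[ℤ] v})

open LinearMap

theorem LinearMap.exists_sub_flip_eq_of_isAlt {R M N : Type*} [CommRing R] [AddCommGroup M]
    [Module R M] [Module.Free R M] [AddCommGroup N] [Module R N]
    {e : M →ₗ[R] M →ₗ[R] N} (he : e.IsAlt) :
    ∃ σ : M →ₗ[R] M →ₗ[R] N, σ - σ.flip = e := by
  let b := Module.Free.chooseBasis R M
  let : LinearOrder (Module.Free.ChooseBasisIndex R M) := IsWellOrder.linearOrder WellOrderingRel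
  refine ⟨b.constr R fun i => b.constr R fun j => if i < j then e (b i) (b j) else 0, ?_⟩
  refine ext_basis b b fun i j => ?_
  simp only [sub_apply, flip_apply, Module.Basis.constr_basis]
  rcases lt_trichotomy i j with h | rfl | h
  · simp [h, h.not_gt]
  · simp [he.self_eq_zero]
  · simp [h, h.not_gt, he.neg]

section

variable {Q : Type} [AddCommGroup Q] (U : Submodule ℤ Q)

noncomputable def lam2QuotMk : Q ⊗[ℤ] Q →ₗ[ℤ] Lam2 Q ⧸ lam2Im U :=
  (lam2Im U).mkQ ∘ₗ (lam2Rel Q).mkQ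

theorem lam2QuotMk_surjective : Function.Surjective (lam2QuotMk U) :=
  (Submodule.mkQ_surjective _).comp (Submodule.mkQ_surjective _)

noncomputable def lam2QuotBilin : Q →ₗ[ℤ] Q →ₗ[ℤ] Lam2 Q ⧸ lam2Im U :=
  (TensorProduct.mk ℤ Q Q).compr₂ (lam2QuotMk U)

theorem lam2QuotBilin_apply (x y : Q) : lam2QuotBilin U x y = lam2QuotMk U (x ⊗ₜ y) := rfl

theorem isAlt_lam2QuotBilin : (lam2QuotBilin U).IsAlt := fun x =>
  congrArg (lam2Im U).mkQ <|
    (Submodule.Quotient.mk_eq_zero _).2 (Submodule.subset_span ⟨x, rfl⟩)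

theorem lam2QuotMk_tmul_comm (x y : Q) :
    lam2QuotMk U (y ⊗ₜ x) = -lam2QuotMk U (x ⊗ₜ y) :=
  ((isAlt_lam2QuotBilin U).neg x y).symm

theorem lam2QuotMk_tmul_of_mem {u v : Q} (hu : u ∈ U) (hv : v ∈ U) :
    lam2QuotMk U (u ⊗ₜ v) = 0 :=
  (Submodule.Quotient.mk_eq_zero _).2
    (Submodule.mem_map_of_mem (Submodule.subset_span ⟨u, hu, v, hv, rfl⟩))

theorem lam2QuotMk_tmul_eq_of_sub_mem {x y a c : Q} (hx : x - a ∈ U) (hy : y - c ∈ U) :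
    lam2QuotMk U (x ⊗ₜ y) =
      lam2QuotMk U (a ⊗ₜ y) - lam2QuotMk U (c ⊗ₜ x) - lam2QuotMk U (a ⊗ₜ c) := by
  have h₁ := lam2QuotMk_tmul_of_mem U hx hy
  have h₂ := lam2QuotMk_tmul_comm U (x - a) c
  have h₃ := lam2QuotMk_tmul_comm U a c
  simp only [tmul_sub, sub_tmul, map_sub] at h₁ h₂ ⊢
  linear_combination (norm := abel) h₁ + h₂ + h₃

noncomputable def skewTensor : Q ⊗[ℤ] Q →ₗ[ℤ] (Q ⧸ U) ⊗[ℤ] Q :=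
  U.mkQ.rTensor Q - U.mkQ.rTensor Q ∘ₗ TensorProduct.comm ℤ Q Q

@[simp]
theorem skewTensor_tmul (x y : Q) :
    skewTensor U (x ⊗ₜ y) = U.mkQ x ⊗ₜ y - U.mkQ y ⊗ₜ x := rfl

theorem lTensor_mkQ_skewTensor_tmul (x y : Q) :
    U.mkQ.lTensor (Q ⧸ U) (skewTensor U (x ⊗ₜ y)) =
      U.mkQ x ⊗ₜ U.mkQ y - U.mkQ y ⊗ₜ U.mkQ x := by
  simp

theorem range_lTensor_subtype_le_range_skewTensor :
    range (U.subtype.lTensor (Q ⧸ U)) ≤ range (skewTensor U) := by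
  rintro _ ⟨w, rfl⟩
  induction w using TensorProduct.induction_on with
  | zero => rw [map_zero]; exact zero_mem _
  | tmul b u =>
    obtain ⟨x, rfl⟩ := U.mkQ_surjective b
    exact ⟨x ⊗ₜ u, by simp [(Submodule.Quotient.mk_eq_zero U).2 u.2]⟩
  | add w₁ w₂ h₁ h₂ => rw [map_add]; exact add_mem h₁ h₂

theorem lTensor_mkQ_mem_sp2Rel_iff (z : (Q ⧸ U) ⊗[ℤ] Q) :
    U.mkQ.lTensor (Q ⧸ U) z ∈ sp2Rel (Q ⧸ U) ↔ z ∈ range (skewTensor U) := by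
  constructor
  · intro hz
    have hsp : ∀ w ∈ sp2Rel (Q ⧸ U), w ∈ (range (skewTensor U)).map (U.mkQ.lTensor (Q ⧸ U)) := by
      intro w hw
      induction hw using Submodule.span_induction with
      | mem _ h =>
        obtain ⟨a, c, rfl⟩ := h
        obtain ⟨x, rfl⟩ := U.mkQ_surjective a
        obtain ⟨y, rfl⟩ := U.mkQ_surjective c
        exact ⟨_, ⟨x ⊗ₜ y, rfl⟩, lTensor_mkQ_skewTensor_tmul U x y⟩
      | zero => exact zero_mem _
      | add _ _ _ _ h₁ h₂ => exact add_mem h₁ h₂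
      | smul n _ _ h => exact zsmul_mem h n
    obtain ⟨z₀, hz₀, hz₀z⟩ := hsp _ hz
    have hker : z - z₀ ∈ ker (U.mkQ.lTensor (Q ⧸ U)) := by
      rw [mem_ker, map_sub, hz₀z, sub_self]
    rw [lTensor_mkQ] at hker
    exact sub_add_cancel z z₀ ▸ add_mem (range_lTensor_subtype_le_range_skewTensor U hker) hz₀
  · rintro ⟨w, rfl⟩
    induction w using TensorProduct.induction_on with
    | zero => rw [map_zero, map_zero]; exact zero_mem _
    | tmul x y =>
      rw [lTensor_mkQ_skewTensor_tmul]
      exact Submodule.subset_span ⟨_, _, rfl⟩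
    | add w₁ w₂ h₁ h₂ => rw [map_add, map_add]; exact add_mem h₁ h₂

theorem sub_mem_of_mkQ_comp_eq_id {s : Q ⧸ U →ₗ[ℤ] Q} (hs : U.mkQ ∘ₗ s = LinearMap.id) (x : Q) :
    x - s (U.mkQ x) ∈ U := by
  rw [← Submodule.Quotient.mk_eq_zero, Submodule.Quotient.mk_sub]
  exact sub_eq_zero.2 (LinearMap.congr_fun hs (U.mkQ x)).symm

theorem lam2QuotMk_eq_zero_of_skewTensor_eq_zero [Module.Free ℤ (Q ⧸ U)] {w : Q ⊗[ℤ] Q}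
    (hw : skewTensor U w = 0) : lam2QuotMk U w = 0 := by
  obtain ⟨s, hs⟩ := Module.projective_lifting_property U.mkQ LinearMap.id U.mkQ_surjective
  obtain ⟨σ, hσ⟩ := exists_sub_flip_eq_of_isAlt (e := (lam2QuotBilin U).compl₁₂ s s)
    fun a => isAlt_lam2QuotBilin U (s a)
  let r := TensorProduct.lift (lam2QuotBilin U ∘ₗ s + σ.flip.compl₂ U.mkQ)
  have hr : ∀ w, r (skewTensor U w) = lam2QuotMk U w := by
    intro w
    induction w using TensorProduct.induction_on with
    | zero => simp only [map_zero]
    | add w₁ w₂ h₁ h₂ => simp only [map_add, h₁, h₂]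
    | tmul x y => ?_
    have hσxy := LinearMap.congr_fun₂ hσ (U.mkQ x) (U.mkQ y)
    simp only [LinearMap.sub_apply, flip_apply, compl₁₂_apply, lam2QuotBilin_apply] at hσxy
    simp only [r, skewTensor_tmul, map_sub, TensorProduct.lift.tmul, LinearMap.add_apply,
      compl₂_apply, flip_apply, comp_apply, lam2QuotBilin_apply]
    rw [lam2QuotMk_tmul_eq_of_sub_mem U (sub_mem_of_mkQ_comp_eq_id U hs x)
      (sub_mem_of_mkQ_comp_eq_id U hs y), ← hσxy]
    abel
  rw [← hr, hw, map_zero]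

end

theorem stmt8_general (Q : Type) [AddCommGroup Q] [Module ℤ Q]
    (U : Submodule ℤ Q) [Module.Free ℤ (Q ⧸ U)]
    (f : (Lam2 Q ⧸ lam2Im U) →ₗ[ℤ] (Q ⧸ U) ⊗[ℤ] Q)
    (g : (Q ⧸ U) ⊗[ℤ] Q →ₗ[ℤ] SP2 (Q ⧸ U))
    (hf : ∀ x y : Q,
      f (Submodule.Quotient.mk (Submodule.Quotient.mk (x ⊗ₜ[ℤ] y))) =
        (Submodule.Quotient.mk x : Q ⧸ U) ⊗ₜ[ℤ] y -
          (Submodule.Quotient.mk y : Q ⧸ U) ⊗ₜ[ℤ] x)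
    (hg : ∀ (x : Q ⧸ U) (y : Q),
      g (x ⊗ₜ[ℤ] y) = Submodule.Quotient.mk (x ⊗ₜ[ℤ] (Submodule.Quotient.mk y : Q ⧸ U))) :
    Function.Injective f ∧ Function.Surjective g ∧ LinearMap.ker g = LinearMap.range f := by
  -- The ℤ-module structure of an abelian group is unique; switch to the canonical one.
  obtain rfl : ‹Module ℤ Q› = AddCommGroup.toIntModule Q := Subsingleton.elim _ _
  have hf_skew : ∀ w, f (lam2QuotMk U w) = skewTensor U w := by
    intro w
    induction w using TensorProduct.induction_on with
    | zero => simp only [map_zero]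
    | add w₁ w₂ h₁ h₂ => simp only [map_add, h₁, h₂]
    | tmul x y => exact hf x y
  have hg_lTensor : ∀ z, g z = Submodule.Quotient.mk (U.mkQ.lTensor (Q ⧸ U) z) := by
    intro z
    induction z using TensorProduct.induction_on with
    | zero => simp only [map_zero]; rfl
    | add z₁ z₂ h₁ h₂ => simp only [map_add, h₁, h₂]; rfl
    | tmul x y => exact hg x y
  refine ⟨?_, ?_, ?_⟩
  · refine (injective_iff_map_eq_zero f).2 fun z hz => ?_
    obtain ⟨w, rfl⟩ := lam2QuotMk_surjective U z
    exact lam2QuotMk_eq_zero_of_skewTensor_eq_zero U (hf_skew w ▸ hz)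
  · intro y
    obtain ⟨z, rfl⟩ :=
      (Submodule.mkQ_surjective _).comp (lTensor_surjective (Q ⧸ U) U.mkQ_surjective) y
    exact ⟨z, hg_lTensor z⟩
  · ext z
    rw [mem_ker, hg_lTensor, Submodule.Quotient.mk_eq_zero, lTensor_mkQ_mem_sp2Rel_iff, mem_range,
      mem_range, (lam2QuotMk_surjective U).exists]
    simp only [hf_skew]

theorem stmt8 (Q : Type) [AddCommGroup Q] [Module ℤ Q] [Module.Free ℤ Q]
    (U : Submodule ℤ Q) [Module.Free ℤ (Q ⧸ U)]
    (f : (Lam2 Q ⧸ lam2Im U) →ₗ[ℤ] (Q ⧸ U) ⊗[ℤ] Q)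
    (g : (Q ⧸ U) ⊗[ℤ] Q →ₗ[ℤ] SP2 (Q ⧸ U))
    (hf : ∀ x y : Q,
      f (Submodule.Quotient.mk (Submodule.Quotient.mk (x ⊗ₜ[ℤ] y))) =
        (Submodule.Quotient.mk x : Q ⧸ U) ⊗ₜ[ℤ] y -
          (Submodule.Quotient.mk y : Q ⧸ U) ⊗ₜ[ℤ] x)
    (hg : ∀ (x : Q ⧸ U) (y : Q),
      g (x ⊗ₜ[ℤ] y) = Submodule.Quotient.mk (x ⊗ₜ[ℤ] (Submodule.Quotient.mk y : Q ⧸ U))) :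
    Function.Injective f ∧ Function.Surjective g ∧ LinearMap.ker g = LinearMap.range f :=
  stmt8_general Q U f g hf hg
end

section
/- Let F be a free group and let R, S be normal subgroups of F such that [F,F] ⊆ R and [F,F] ⊆ S. Then (R'∩S)·(R∩S') = R'·S'. -/
theorem stmt14 (F : Type) [Group F] [IsFreeGroup F] (R S : Subgroup F)
    [R.Normal] [S.Normal] (hR : commutator F ≤ R) (hS : commutator F ≤ S) :
    (⁅R, R⁆ ⊓ S) ⊔ (R ⊓ ⁅S, S⁆) = ⁅R, R⁆ ⊔ ⁅S, S⁆ := by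
  have h1 : ⁅R, R⁆ ≤ S := le_trans (Subgroup.commutator_mono le_top le_top) hS
  have h2 : ⁅S, S⁆ ≤ R := le_trans (Subgroup.commutator_mono le_top le_top) hR
  rw [inf_eq_left.mpr h1, inf_eq_right.mpr h2]
end

section
/- Let F be the free group on generators a₁, …, aₙ, b (n ≥ 1), R the normal closure in F of {a₁, …, aₙ} ∪ [F,F], and S the normal closure in F of {a₁², …, aₙ², b} ∪ [F,F]. Then for every i = 1, …, n, the element [aᵢ,b]² lies in R'·S'. -/
/-- The free group on generators `a₁, …, aₙ, b`. -/
abbrev FG (n : ℕ) := FreeGroup (Fin n ⊕ Unit)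

/-- The generators `a i`. -/
def agen (n : ℕ) (i : Fin n) : FG n := FreeGroup.of (Sum.inl i)

/-- The generator `b`. -/
def bgen (n : ℕ) : FG n := FreeGroup.of (Sum.inr ())

/-- `R`, the normal closure of `{a₁, …, aₙ} ∪ [F,F]` in `F`. -/
abbrev Rsub (n : ℕ) : Subgroup (FG n) :=
  Subgroup.normalClosure (Set.range (agen n) ∪ (commutator (FG n) : Set (FG n)))

/-- `S`, the normal closure of `{a₁², …, aₙ², b} ∪ [F,F]` in `F`. -/
abbrev Ssub (n : ℕ) : Subgroup (FG n) :=
  Subgroup.normalClosure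
    ((Set.range fun i => agen n i ^ 2) ∪ {bgen n} ∪ (commutator (FG n) : Set (FG n)))

/-!
Write `x = aᵢ⁻¹`, `y = b⁻¹`, so that `[aᵢ, b] = ⁅x, y⁆`. The commutator identity
`⁅x, y⁆² = ⁅x², y⁆ ⁅y x y⁻¹, ⁅y, x⁆⁆` splits the square into a commutator of two elements
of `S` (as `x², y ∈ S`) and a commutator of two elements of `R` (as `x ∈ R` and `R` is normal).
-/

open scoped commutatorElement

theorem commutatorElement_sq {G : Type*} [Group G] (x y : G) :
    ⁅x, y⁆ ^ 2 = ⁅x ^ 2, y⁆ * ⁅y * x * y⁻¹, ⁅y, x⁆⁆ := by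
  simp only [commutatorElement_def, pow_two]
  group

theorem commutatorElement_sq_mem_commutator_sup {G : Type*} [Group G] {H K : Subgroup G}
    [H.Normal] {x y : G} (hx : x ∈ H) (hx2 : x ^ 2 ∈ K) (hy : y ∈ K) :
    ⁅x, y⁆ ^ 2 ∈ ⁅H, H⁆ ⊔ ⁅K, K⁆ := by
  have hconj : y * x * y⁻¹ ∈ H := ‹H.Normal›.conj_mem x hx y
  have hyx : ⁅y, x⁆ ∈ H := by
    rw [commutatorElement_def]
    exact mul_mem hconj (inv_mem hx)
  rw [commutatorElement_sq]
  exact mul_mem (Subgroup.mem_sup_right (Subgroup.commutator_mem_commutator hx2 hy))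
    (Subgroup.mem_sup_left (Subgroup.commutator_mem_commutator hconj hyx))

theorem stmt15_general (n : ℕ) (i : Fin n) :
    ((agen n i)⁻¹ * (bgen n)⁻¹ * agen n i * bgen n) ^ 2 ∈
      ⁅Rsub n, Rsub n⁆ ⊔ ⁅Ssub n, Ssub n⁆ := by
  have haR : agen n i ∈ Rsub n := Subgroup.subset_normalClosure (Or.inl ⟨i, rfl⟩)
  have ha2S : (agen n i)⁻¹ ^ 2 ∈ Ssub n := by
    rw [inv_pow]
    exact inv_mem (Subgroup.subset_normalClosure (Or.inl (Or.inl ⟨i, rfl⟩)))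
  have hbS : bgen n ∈ Ssub n := Subgroup.subset_normalClosure (Or.inl (Or.inr rfl))
  have hcomm : (agen n i)⁻¹ * (bgen n)⁻¹ * agen n i * bgen n = ⁅(agen n i)⁻¹, (bgen n)⁻¹⁆ := by
    rw [commutatorElement_def, inv_inv, inv_inv]
  rw [hcomm]
  exact commutatorElement_sq_mem_commutator_sup (inv_mem haR) ha2S (inv_mem hbS)

theorem stmt15 (n : ℕ) (hn : 1 ≤ n) (i : Fin n) :
    ((agen n i)⁻¹ * (bgen n)⁻¹ * agen n i * bgen n) ^ 2 ∈
      ⁅Rsub n, Rsub n⁆ ⊔ ⁅Ssub n, Ssub n⁆ :=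
  stmt15_general n i
end

section
/- Let F be the free group on generators a₁, …, aₙ, b (n ≥ 1), R the normal closure in F of {a₁, …, aₙ} ∪ [F,F], and S the normal closure in F of {a₁², …, aₙ², b} ∪ [F,F]. Then R'·S' is generated as a subgroup of F by γ₃(F) together with the elements [aᵢ,aⱼ] for 1 ≤ i < j ≤ n and the elements [aᵢ,b]² for 1 ≤ i ≤ n. -/
open scoped commutatorElement

open Subgroup hiding FG

section General

variable {G : Type*} [Group G]

lemma commutatorElement_inv_inv (x y : G) : ⁅x⁻¹, y⁻¹⁆ = x⁻¹ * y⁻¹ * x * y := by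
  rw [commutatorElement_def, inv_inv, inv_inv]

lemma commutatorElement_mem_iff_commute_mk {N : Subgroup G} [N.Normal] {x y : G} :
    ⁅x, y⁆ ∈ N ↔ Commute (x : G ⧸ N) (y : G ⧸ N) := by
  rw [← QuotientGroup.eq_one_iff, ← QuotientGroup.mk'_apply, map_commutatorElement,
    commutatorElement_eq_one_iff_commute]
  rfl

lemma commutatorElement_mem_of_mem_commutator_left {N : Subgroup G}
    (hN : (⊤ : Subgroup G).lowerCentralSeries 2 ≤ N) {c : G} (hc : c ∈ _root_.commutator G)
    (y : G) :
    ⁅c, y⁆ ∈ N :=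
  hN (commutator_mem_commutator hc (mem_top y))

lemma commutatorElement_mem_of_mem_commutator_right {N : Subgroup G}
    (hN : (⊤ : Subgroup G).lowerCentralSeries 2 ≤ N) {c : G} (hc : c ∈ _root_.commutator G)
    (x : G) :
    ⁅x, c⁆ ∈ N := by
  rw [← commutatorElement_inv]
  exact inv_mem (commutatorElement_mem_of_mem_commutator_left hN hc x)

lemma commutatorElement_mem_of_forall_lt {ι : Type*} [LinearOrder ι] (f : ι → G)
    {N : Subgroup G} (h : ∀ i j, i < j → ⁅f i, f j⁆ ∈ N) (i j : ι) : ⁅f i, f j⁆ ∈ N := by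
  rcases lt_trichotomy i j with hij | rfl | hji
  · exact h i j hij
  · rw [commutatorElement_self]
    exact one_mem N
  · rw [← commutatorElement_inv]
    exact inv_mem (h j i hji)

lemma Subgroup.normal_of_le_commutator {H : Subgroup G} (hH : H ≤ _root_.commutator G)
    (h : (⊤ : Subgroup G).lowerCentralSeries 2 ≤ H) : H.Normal := by
  rw [← normalizer_eq_top_iff, eq_top_iff, le_normalizer_iff_commutator_le_left]
  exact (commutator_mono hH le_rfl).trans h

lemma Subgroup.commutator_top_le_of_closure_eq_top {K N : Subgroup G} [N.Normal] {s : Set G}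
    (hs : closure s = ⊤) (h : ∀ c ∈ K, ∀ x ∈ s, ⁅c, x⁆ ∈ N) : ⁅K, ⊤⁆ ≤ N := by
  refine commutator_le.2 fun c hc g _ => commutatorElement_mem_iff_commute_mk.2 ?_
  have hcentral : closure s ≤ (centralizer {(c : G ⧸ N)}).comap (QuotientGroup.mk' N) :=
    (closure_le _).2 fun x hx =>
      mem_centralizer_singleton_iff.2 (commutatorElement_mem_iff_commute_mk.1 (h c hc x hx)).symm
  rw [hs] at hcentral
  exact (mem_centralizer_singleton_iff.1 (hcentral (mem_top g))).symm

lemma commutatorElement_inv_inv_of_mem_center {x y : G} (hc : ⁅x, y⁆ ∈ center G) :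
    ⁅x⁻¹, y⁻¹⁆ = ⁅x, y⁆ := by
  have hconj : ⁅x⁻¹, y⁻¹⁆ = (y * x)⁻¹ * ⁅x, y⁆ * (y * x) := by
    simp only [commutatorElement_def]
    group
  rw [hconj, mul_assoc, ← mem_center_iff.1 hc (y * x), inv_mul_cancel_left]

lemma commutatorElement_pow_two_left_of_mem_center {x y : G} (hc : ⁅x, y⁆ ∈ center G) :
    ⁅x ^ 2, y⁆ = ⁅x, y⁆ ^ 2 := by
  have hconj : ⁅x ^ 2, y⁆ = x * ⁅x, y⁆ * x⁻¹ * ⁅x, y⁆ := by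
    simp only [commutatorElement_def, pow_two]
    group
  rw [hconj, mem_center_iff.1 hc x, mul_inv_cancel_right, pow_two]

lemma Commute.conj_left_of_commutatorElement_mem_center {x y g : G} (h : Commute x y)
    (hc : ⁅g, x⁆ ∈ center G) : Commute (g * x * g⁻¹) y := by
  have hconj : g * x * g⁻¹ = ⁅g, x⁆ * x := by
    simp only [commutatorElement_def]
    group
  rw [hconj]
  exact Commute.mul_left (mem_center_iff.1 hc y).symm h

lemma Subgroup.commute_of_mem_normalClosure (hcen : ∀ x y : G, ⁅x, y⁆ ∈ center G) {s : Set G}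
    (hs : ∀ x ∈ s, ∀ y ∈ s, Commute x y) {a b : G} (ha : a ∈ normalClosure s)
    (hb : b ∈ normalClosure s) : Commute a b := by
  have hconj : ∀ x ∈ Group.conjugatesOfSet s, ∀ y ∈ Group.conjugatesOfSet s, x * y = y * x := by
    intro x hx y hy
    obtain ⟨x₀, hx₀, g, rfl⟩ := (Group.mem_conjugatesOfSet_iff.1 hx).imp fun _ h =>
      h.imp_right isConj_iff.1
    obtain ⟨y₀, hy₀, k, rfl⟩ := (Group.mem_conjugatesOfSet_iff.1 hy).imp fun _ h =>
      h.imp_right isConj_iff.1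
    exact (((hs y₀ hy₀ x₀ hx₀).conj_left_of_commutatorElement_mem_center (hcen k y₀)).symm
      |>.conj_left_of_commutatorElement_mem_center (hcen g x₀)).eq
  exact Set.centralizer_centralizer_comm_of_comm hconj a
    (closure_le_centralizer_centralizer _ ha) b (closure_le_centralizer_centralizer _ hb)

lemma QuotientGroup.commutatorElement_mem_center {N : Subgroup G} [N.Normal]
    (hN : (⊤ : Subgroup G).lowerCentralSeries 2 ≤ N) (x y : G ⧸ N) : ⁅x, y⁆ ∈ center (G ⧸ N) := by
  refine mem_center_iff.2 fun z => ?_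
  induction x using QuotientGroup.induction_on
  induction y using QuotientGroup.induction_on
  induction z using QuotientGroup.induction_on
  exact (commutatorElement_mem_iff_commute_mk.1
    (commutatorElement_mem_of_mem_commutator_left hN
      (commutator_mem_commutator (mem_top _) (mem_top _)) _)).symm.eq

lemma Subgroup.commutator_normalClosure_union_commutator_le {N : Subgroup G} [N.Normal]
    (hN : (⊤ : Subgroup G).lowerCentralSeries 2 ≤ N) {s : Set G}
    (hs : ∀ x ∈ s, ∀ y ∈ s, ⁅x, y⁆ ∈ N) :
    ⁅normalClosure (s ∪ _root_.commutator G), normalClosure (s ∪ _root_.commutator G)⁆ ≤ N := by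
  have hpair : ∀ x ∈ s ∪ _root_.commutator G, ∀ y ∈ s ∪ _root_.commutator G, ⁅x, y⁆ ∈ N := by
    rintro x (hx | hx) y (hy | hy)
    · exact hs x hx y hy
    · exact commutatorElement_mem_of_mem_commutator_right hN hy x
    all_goals exact commutatorElement_mem_of_mem_commutator_left hN hx y
  have hmap := map_normalClosure (s ∪ _root_.commutator G) (QuotientGroup.mk' N)
    (QuotientGroup.mk'_surjective N)
  refine commutator_le.2 fun a ha b hb => commutatorElement_mem_iff_commute_mk.2 ?_
  refine commute_of_mem_normalClosure (QuotientGroup.commutatorElement_mem_center hN) ?_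
    (hmap ▸ mem_map_of_mem _ ha) (hmap ▸ mem_map_of_mem _ hb)
  rintro _ ⟨x, hx, rfl⟩ _ ⟨y, hy, rfl⟩
  exact commutatorElement_mem_iff_commute_mk.1 (hpair x hx y hy)

end General

section Relators

variable {n : ℕ}

def ContainsRelators (N : Subgroup (FG n)) : Prop :=
  (∀ i j, ⁅agen n i, agen n j⁆ ∈ N) ∧ ∀ i, ⁅agen n i ^ 2, bgen n⁆ ∈ N

variable (n) in
def relatorGenerators : Set (FG n) :=
  ((Subgroup.lowerCentralSeries (⊤ : Subgroup (FG n)) 2 : Set (FG n)) ∪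
    {w | ∃ i j : Fin n, i < j ∧ w = (agen n i)⁻¹ * (agen n j)⁻¹ * agen n i * agen n j} ∪
    {w | ∃ i : Fin n, w = ((agen n i)⁻¹ * (bgen n)⁻¹ * agen n i * bgen n) ^ 2})

lemma agen_mem_Rsub (i : Fin n) : agen n i ∈ Rsub n :=
  subset_normalClosure (Or.inl ⟨i, rfl⟩)

lemma agen_sq_mem_Ssub (i : Fin n) : agen n i ^ 2 ∈ Ssub n :=
  subset_normalClosure (Or.inl (Or.inl ⟨i, rfl⟩))

lemma bgen_mem_Ssub : bgen n ∈ Ssub n :=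
  subset_normalClosure (Or.inl (Or.inr rfl))

lemma lowerCentralSeries_two_le_commutator_Rsub_sup_commutator_Ssub :
    (⊤ : Subgroup (FG n)).lowerCentralSeries 2 ≤ ⁅Rsub n, Rsub n⁆ ⊔ ⁅Ssub n, Ssub n⁆ := by
  refine commutator_top_le_of_closure_eq_top (FreeGroup.closure_range_of _) ?_
  rintro c hc _ ⟨i | ⟨⟩, rfl⟩
  · exact mem_sup_left (commutator_mem_commutator (subset_normalClosure (Or.inr hc))
      (agen_mem_Rsub i))
  · exact mem_sup_right (commutator_mem_commutator (subset_normalClosure (Or.inr hc))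
      bgen_mem_Ssub)

lemma commutator_Rsub_sup_commutator_Ssub_le_iff {N : Subgroup (FG n)} [N.Normal]
    (hN : (⊤ : Subgroup (FG n)).lowerCentralSeries 2 ≤ N) :
    ⁅Rsub n, Rsub n⁆ ⊔ ⁅Ssub n, Ssub n⁆ ≤ N ↔ ContainsRelators N := by
  refine ⟨fun h => ⟨fun i j => h (mem_sup_left ?_), fun i => h (mem_sup_right ?_)⟩, ?_⟩
  · exact commutator_mem_commutator (agen_mem_Rsub i) (agen_mem_Rsub j)
  · exact commutator_mem_commutator (agen_sq_mem_Ssub i) bgen_mem_Ssub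
  rintro ⟨hAA, hAB⟩
  refine sup_le (commutator_normalClosure_union_commutator_le hN ?_)
    (commutator_normalClosure_union_commutator_le hN ?_)
  · rintro _ ⟨i, rfl⟩ _ ⟨j, rfl⟩
    exact hAA i j
  · rintro _ (⟨i, rfl⟩ | rfl) _ (⟨j, rfl⟩ | rfl)
    · rw [commutatorElement_mem_iff_commute_mk, QuotientGroup.mk_pow, QuotientGroup.mk_pow]
      exact (commutatorElement_mem_iff_commute_mk.1 (hAA i j)).pow_pow 2 2
    · exact hAB i
    · rw [← commutatorElement_inv]
      exact inv_mem (hAB j)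
    · rw [commutatorElement_self]
      exact one_mem N

lemma relatorGenerators_subset_commutator : relatorGenerators n ⊆ _root_.commutator (FG n) := by
  rintro _ ((h | ⟨i, j, -, rfl⟩) | ⟨i, rfl⟩)
  · exact Subgroup.lowerCentralSeries_antitone _ one_le_two h
  · rw [← commutatorElement_inv_inv]
    exact commutator_mem_commutator (mem_top _) (mem_top _)
  · rw [← commutatorElement_inv_inv]
    exact pow_mem (commutator_mem_commutator (mem_top _) (mem_top _)) 2

lemma closure_relatorGenerators_le_iff {N : Subgroup (FG n)} [N.Normal]
    (hN : (⊤ : Subgroup (FG n)).lowerCentralSeries 2 ≤ N) :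
    closure (relatorGenerators n) ≤ N ↔ ContainsRelators N := by
  have hAA : ∀ i j, ⁅(agen n i)⁻¹, (agen n j)⁻¹⁆ ∈ N ↔ ⁅agen n i, agen n j⁆ ∈ N := by
    simp only [commutatorElement_mem_iff_commute_mk, QuotientGroup.mk_inv, Commute.inv_inv_iff,
      implies_true]
  have hAB : ∀ i, ⁅(agen n i)⁻¹, (bgen n)⁻¹⁆ ^ 2 ∈ N ↔ ⁅agen n i ^ 2, bgen n⁆ ∈ N := by
    intro i
    have hcen := QuotientGroup.commutatorElement_mem_center hN
      (QuotientGroup.mk' N (agen n i)) (QuotientGroup.mk' N (bgen n))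
    rw [← QuotientGroup.ker_mk' N, MonoidHom.mem_ker, MonoidHom.mem_ker, map_pow,
      map_commutatorElement, map_inv, map_inv, commutatorElement_inv_inv_of_mem_center hcen,
      map_commutatorElement, map_pow, commutatorElement_pow_two_left_of_mem_center hcen]
  rw [closure_le]
  constructor
  · intro h
    refine ⟨commutatorElement_mem_of_forall_lt (agen n) fun i j hij => (hAA i j).1 ?_,
      fun i => (hAB i).1 ?_⟩
    · exact commutatorElement_inv_inv (agen n i) (agen n j) ▸
        h (Or.inl (Or.inr ⟨i, j, hij, rfl⟩))
    · exact commutatorElement_inv_inv (agen n i) (bgen n) ▸ h (Or.inr ⟨i, rfl⟩)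
  · rintro ⟨hR, hS⟩ _ ((h | ⟨i, j, -, rfl⟩) | ⟨i, rfl⟩)
    · exact hN h
    · rw [← commutatorElement_inv_inv]
      exact (hAA i j).2 (hR i j)
    · rw [← commutatorElement_inv_inv]
      exact (hAB i).2 (hS i)

end Relators

theorem stmt16_general (n : ℕ) :
    ⁅Rsub n, Rsub n⁆ ⊔ ⁅Ssub n, Ssub n⁆ =
      Subgroup.closure
        ((Subgroup.lowerCentralSeries (⊤ : Subgroup (FG n)) 2 : Set (FG n)) ∪
          {w | ∃ i j : Fin n, i < j ∧ w = (agen n i)⁻¹ * (agen n j)⁻¹ * agen n i * agen n j} ∪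
          {w | ∃ i : Fin n, w = ((agen n i)⁻¹ * (bgen n)⁻¹ * agen n i * bgen n) ^ 2}) := by
  change _ = closure (relatorGenerators n)
  have hγH : (⊤ : Subgroup (FG n)).lowerCentralSeries 2 ≤ closure (relatorGenerators n) :=
    fun _ h => subset_closure (Or.inl (Or.inl h))
  have hγN := lowerCentralSeries_two_le_commutator_Rsub_sup_commutator_Ssub (n := n)
  have := normal_of_le_commutator ((closure_le _).2 relatorGenerators_subset_commutator) hγH
  exact le_antisymm
    ((commutator_Rsub_sup_commutator_Ssub_le_iff hγH).2
      ((closure_relatorGenerators_le_iff hγH).1 le_rfl))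
    ((closure_relatorGenerators_le_iff hγN).2
      ((commutator_Rsub_sup_commutator_Ssub_le_iff hγN).1 le_rfl))

theorem stmt16 (n : ℕ) (hn : 1 ≤ n) :
    ⁅Rsub n, Rsub n⁆ ⊔ ⁅Ssub n, Ssub n⁆ =
      Subgroup.closure
        ((Subgroup.lowerCentralSeries (⊤ : Subgroup (FG n)) 2 : Set (FG n)) ∪
          {w | ∃ i j : Fin n, i < j ∧ w = (agen n i)⁻¹ * (agen n j)⁻¹ * agen n i * agen n j} ∪
          {w | ∃ i : Fin n, w = ((agen n i)⁻¹ * (bgen n)⁻¹ * agen n i * bgen n) ^ 2}) :=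
  stmt16_general n
end

section
/- Let F be the free group on generators a₁, …, aₙ, b (n ≥ 1), R the normal closure in F of {a₁, …, aₙ} ∪ [F,F], and S the normal closure in F of {a₁², …, aₙ², b} ∪ [F,F]. Then the images of the commutators [a₁,b], …, [aₙ,b] in the quotient (R∩S)/(R'·S') generate a subgroup isomorphic to (ℤ/2ℤ)ⁿ. -/
/-- Each commutator `[aᵢ, b] = aᵢ⁻¹ b⁻¹ aᵢ b` lies in `R ∩ S`. -/
theorem ab_mem (n : ℕ) (i : Fin n) :
    (agen n i)⁻¹ * (bgen n)⁻¹ * agen n i * bgen n ∈ Rsub n ⊓ Ssub n := by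
  have hc : (agen n i)⁻¹ * (bgen n)⁻¹ * agen n i * bgen n ∈ commutator (FG n) := by
    have h := Subgroup.commutator_mem_commutator
      (Subgroup.mem_top (agen n i)⁻¹) (Subgroup.mem_top (bgen n)⁻¹)
    rw [commutator_def]
    simpa [commutatorElement_def, mul_assoc] using h
  exact ⟨Subgroup.subset_normalClosure (Or.inr hc),
    Subgroup.subset_normalClosure (Or.inr hc)⟩

/-!
For each `j`, the map `F → D₄` with `aⱼ ↦ r`, `aᵢ ↦ 1` (`i ≠ j`) and `b ↦ s` sends `R` into the
rotations and `S` into the Klein four-group `⟨r², s⟩`. Both are abelian, so the map kills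
`R'S'` and descends to `(R ∩ S)/(R'S')`, where it sends the class `cᵢ` of `[aᵢ, b]` to `r²` if
`i = j` and to `1` otherwise.

The quotient is abelian since `R ∩ S ≤ R`, and `cᵢ² = 1` because, with `w = [a, b] = a⁻¹b⁻¹ab`,
`w² = ⁅w, a⁻¹⁆⁅a⁻², b⁻¹⁆ ∈ R'S'` (Mathlib's `⁅x, y⁆` is `xyx⁻¹y⁻¹`). So the `cᵢ` are commuting
involutions, which the maps to `D₄` separate; hence they generate a copy of `(ℤ/2)ⁿ`.
-/

open Subgroup
open scoped commutatorElement

section IndependentInvolutions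

def zmodPowHom {M : Type*} [Monoid M] {n : ℕ} [NeZero n] {g : M} (hg : g ^ n = 1) :
    Multiplicative (ZMod n) →* M where
  toFun x := g ^ x.toAdd.val
  map_one' := by simp
  map_mul' x y := by
    rw [toAdd_mul, ZMod.val_add, ← pow_mod_orderOf,
      Nat.mod_mod_of_dvd _ (orderOf_dvd_of_pow_eq_one hg), pow_mod_orderOf, pow_add]

variable {G : Type*} [CommGroup G] {ι : Type*} [Fintype ι] {c : ι → G}

def involutionsHom (hc : ∀ i, c i ^ 2 = 1) : Multiplicative (ι → ZMod 2) →* G where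
  toFun x := ∏ i, zmodPowHom (hc i) (.ofAdd (x.toAdd i))
  map_one' := by simp
  map_mul' x y := by simp [Finset.prod_mul_distrib]

theorem involutionsHom_apply (hc : ∀ i, c i ^ 2 = 1) (x : Multiplicative (ι → ZMod 2)) :
    involutionsHom hc x = ∏ i, c i ^ (x.toAdd i).val := rfl

theorem involutionsHom_ofAdd_single [DecidableEq ι] (hc : ∀ i, c i ^ 2 = 1) (i : ι) :
    involutionsHom hc (.ofAdd (Pi.single i 1)) = c i := by
  rw [involutionsHom_apply, Finset.prod_eq_single i (fun j _ hj => by simp [hj]) (by simp)]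
  simp [ZMod.val_one]

theorem range_involutionsHom [DecidableEq ι] (hc : ∀ i, c i ^ 2 = 1) :
    (involutionsHom hc).range = closure (Set.range c) := by
  apply le_antisymm
  · rintro _ ⟨x, rfl⟩
    exact prod_mem fun i _ => pow_mem (subset_closure (Set.mem_range_self i)) _
  · rw [closure_le]
    rintro _ ⟨i, rfl⟩
    exact ⟨_, involutionsHom_ofAdd_single hc i⟩

theorem involutionsHom_injective {K : ι → Type*} [∀ j, Group (K j)] (hc : ∀ i, c i ^ 2 = 1)
    (ψ : ∀ j, G →* K j) (hψ : ∀ i j, ψ j (c i) = 1 ↔ i ≠ j) :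
    Function.Injective (involutionsHom hc) := by
  classical
  rw [injective_iff_map_eq_one]
  intro x hx
  ext j
  have hj : ψ j (c j) ^ (x.toAdd j).val = 1 := by
    have hker : ∏ i ∈ Finset.univ.erase j, c i ^ (x.toAdd i).val ∈ (ψ j).ker :=
      prod_mem fun i hi => pow_mem ((hψ i j).2 (Finset.ne_of_mem_erase hi)) _
    have h := congrArg (ψ j) hx
    rwa [involutionsHom_apply, ← Finset.mul_prod_erase _ _ (Finset.mem_univ j), map_mul,
      hker, mul_one, map_pow, map_one] at h
  obtain h0 | h1 : x.toAdd j = 0 ∨ x.toAdd j = 1 := by generalize x.toAdd j = z; decide +revert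
  · exact h0
  · rw [h1, ZMod.val_one, pow_one] at hj
    exact ((hψ j j).1 hj rfl).elim

theorem nonempty_closure_range_mulEquiv_of_forall_map_eq_one_iff [DecidableEq ι]
    {K : ι → Type*} [∀ j, Group (K j)] (hc : ∀ i, c i ^ 2 = 1)
    (ψ : ∀ j, G →* K j) (hψ : ∀ i j, ψ j (c i) = 1 ↔ i ≠ j) :
    Nonempty (closure (Set.range c) ≃* Multiplicative (ι → ZMod 2)) :=
  ⟨(MulEquiv.subgroupCongr (range_involutionsHom hc)).symm.trans
    (MonoidHom.ofInjective (involutionsHom_injective hc ψ hψ)).symm⟩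

end IndependentInvolutions

section Commutators

variable {G : Type*} [Group G]

theorem QuotientGroup.mul_comm_of_commutator_le {H N : Subgroup G} [(N.subgroupOf H).Normal]
    (h : ⁅H, H⁆ ≤ N) (x y : H ⧸ N.subgroupOf H) : x * y = y * x := by
  induction x using QuotientGroup.induction_on with | H u =>
  induction y using QuotientGroup.induction_on with | H v =>
  have hc : ((⁅u, v⁆ : H) : H ⧸ N.subgroupOf H) = 1 :=
    (QuotientGroup.eq_one_iff _).2 (mem_subgroupOf.2 (h (commutator_mem_commutator u.2 v.2)))
  rw [← commutatorElement_eq_one_iff_mul_comm, ← hc]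
  exact (map_commutatorElement (QuotientGroup.mk' _) u v).symm

theorem Subgroup.commutator_le_ker_of_le_comap {K : Type*} [Group K] {f : G →* K}
    {H : Subgroup G} {B : Subgroup K} [IsMulCommutative B] (h : H ≤ B.comap f) :
    ⁅H, H⁆ ≤ f.ker := by
  rw [commutator_le]
  intro g₁ h₁ g₂ h₂
  rw [MonoidHom.mem_ker, map_commutatorElement, commutatorElement_eq_one_iff_mul_comm]
  exact congrArg Subtype.val (IsMulCommutative.is_comm.comm (⟨f g₁, h h₁⟩ : B) ⟨f g₂, h h₂⟩)

theorem Subgroup.normalClosure_union_commutator_le_ker {A : Type*} [CommGroup A] (f : G →* A)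
    {s : Set G} (hs : ∀ x ∈ s, f x = 1) : normalClosure (s ∪ _root_.commutator G) ≤ f.ker :=
  normalClosure_le_normal <|
    Set.union_subset hs fun _ hx => Abelianization.commutator_subset_ker f hx

theorem sq_commutator_eq_commutatorElement_mul (a b : G) :
    (a⁻¹ * b⁻¹ * a * b) ^ 2 = ⁅a⁻¹ * b⁻¹ * a * b, a⁻¹⁆ * ⁅(a ^ 2)⁻¹, b⁻¹⁆ := by
  simp only [commutatorElement_def, sq]
  group

end Commutators

namespace DihedralGroup

def reflectionHom : DihedralGroup 4 →* Multiplicative (ZMod 2) where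
  toFun
    | r _ => 1
    | sr _ => .ofAdd 1
  map_one' := rfl
  map_mul' := by decide

-- Its kernel is the Klein four-group `{1, r 2, sr 0, sr 2}`.
def parityHom : DihedralGroup 4 →* Multiplicative (ZMod 2) where
  toFun
    | r i => .ofAdd i.cast
    | sr i => .ofAdd i.cast
  map_one' := rfl
  map_mul' := by decide

instance : IsMulCommutative reflectionHom.ker :=
  ⟨⟨fun ⟨u, hu⟩ ⟨v, hv⟩ => Subtype.ext <|
    (by decide : ∀ u v, reflectionHom u = 1 → reflectionHom v = 1 → u * v = v * u) u v hu hv⟩⟩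

instance : IsMulCommutative parityHom.ker :=
  ⟨⟨fun ⟨u, hu⟩ ⟨v, hv⟩ => Subtype.ext <|
    (by decide : ∀ u v, parityHom u = 1 → parityHom v = 1 → u * v = v * u) u v hu hv⟩⟩

end DihedralGroup

open DihedralGroup

abbrev RSQuotient (n : ℕ) :=
  ↥(Rsub n ⊓ Ssub n) ⧸ (⁅Rsub n, Rsub n⁆ ⊔ ⁅Ssub n, Ssub n⁆).subgroupOf (Rsub n ⊓ Ssub n)

def commutatorClass (n : ℕ) (i : Fin n) : RSQuotient n :=
  QuotientGroup.mk ⟨(agen n i)⁻¹ * (bgen n)⁻¹ * agen n i * bgen n, ab_mem n i⟩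

theorem commutatorClass_sq (n : ℕ) (i : Fin n) : commutatorClass n i ^ 2 = 1 := by
  rw [commutatorClass, ← QuotientGroup.mk_pow, QuotientGroup.eq_one_iff, mem_subgroupOf,
    SubgroupClass.coe_pow, sq_commutator_eq_commutatorElement_mul]
  have ha : agen n i ∈ Rsub n := subset_normalClosure (Or.inl ⟨i, rfl⟩)
  have ha2 : agen n i ^ 2 ∈ Ssub n := subset_normalClosure (Or.inl (Or.inl ⟨i, rfl⟩))
  have hb : bgen n ∈ Ssub n := subset_normalClosure (Or.inl (Or.inr rfl))
  exact mul_mem (mem_sup_left (commutator_mem_commutator (ab_mem n i).1 (inv_mem ha)))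
    (mem_sup_right (commutator_mem_commutator (inv_mem ha2) (inv_mem hb)))

def toDihedral (n : ℕ) (j : Fin n) : FG n →* DihedralGroup 4 :=
  FreeGroup.lift (Sum.elim (fun i => r (if i = j then 1 else 0)) fun _ => sr 0)

theorem toDihedral_agen (n : ℕ) (i j : Fin n) :
    toDihedral n j (agen n i) = r (if i = j then 1 else 0) :=
  FreeGroup.lift_apply_of

theorem toDihedral_bgen (n : ℕ) (j : Fin n) : toDihedral n j (bgen n) = sr 0 :=
  FreeGroup.lift_apply_of

theorem Rsub_le_ker_reflectionHom (n : ℕ) (j : Fin n) :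
    Rsub n ≤ (reflectionHom.comp (toDihedral n j)).ker :=
  normalClosure_union_commutator_le_ker _ <| by
    rintro _ ⟨i, rfl⟩
    rw [MonoidHom.comp_apply, toDihedral_agen]
    rfl

theorem Ssub_le_ker_parityHom (n : ℕ) (j : Fin n) :
    Ssub n ≤ (parityHom.comp (toDihedral n j)).ker :=
  normalClosure_union_commutator_le_ker _ <| by
    rintro _ (⟨i, rfl⟩ | rfl)
    · rw [MonoidHom.comp_apply, map_pow, toDihedral_agen]
      split_ifs <;> decide
    · rw [MonoidHom.comp_apply, toDihedral_bgen]
      rfl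

theorem commutator_sup_le_ker_toDihedral (n : ℕ) (j : Fin n) :
    ⁅Rsub n, Rsub n⁆ ⊔ ⁅Ssub n, Ssub n⁆ ≤ (toDihedral n j).ker :=
  sup_le
    (commutator_le_ker_of_le_comap <|
      (Rsub_le_ker_reflectionHom n j).trans (MonoidHom.comap_ker _ _).ge)
    (commutator_le_ker_of_le_comap <|
      (Ssub_le_ker_parityHom n j).trans (MonoidHom.comap_ker _ _).ge)

def quotientToDihedral (n : ℕ) (j : Fin n) : RSQuotient n →* DihedralGroup 4 :=
  QuotientGroup.lift _ ((toDihedral n j).comp (Rsub n ⊓ Ssub n).subtype) fun _ hx =>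
    commutator_sup_le_ker_toDihedral n j (mem_subgroupOf.mp hx)

theorem quotientToDihedral_commutatorClass_eq_one_iff (n : ℕ) (i j : Fin n) :
    quotientToDihedral n j (commutatorClass n i) = 1 ↔ i ≠ j := by
  change toDihedral n j ((agen n i)⁻¹ * (bgen n)⁻¹ * agen n i * bgen n) = 1 ↔ i ≠ j
  simp only [map_mul, map_inv, toDihedral_agen, toDihedral_bgen]
  by_cases h : i = j <;> simp only [h, if_true, if_false, ne_eq, not_true, not_false_iff] <;> decide

theorem stmt17_general (n : ℕ) :
    Nonempty
      ((Subgroup.closure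
          {x : ↥(Rsub n ⊓ Ssub n) ⧸
              ((⁅Rsub n, Rsub n⁆ ⊔ ⁅Ssub n, Ssub n⁆).subgroupOf (Rsub n ⊓ Ssub n)) |
            ∃ i : Fin n, x = QuotientGroup.mk
              (⟨(agen n i)⁻¹ * (bgen n)⁻¹ * agen n i * bgen n, ab_mem n i⟩ :
                ↥(Rsub n ⊓ Ssub n))}) ≃*
        Multiplicative (Fin n → ZMod 2)) := by
  let _ : CommGroup (RSQuotient n) :=
    { mul_comm := QuotientGroup.mul_comm_of_commutator_le <|
        (commutator_mono inf_le_left inf_le_left).trans le_sup_left }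
  have key := nonempty_closure_range_mulEquiv_of_forall_map_eq_one_iff (commutatorClass_sq n)
    (quotientToDihedral n) (quotientToDihedral_commutatorClass_eq_one_iff n)
  have hgen : Set.range (commutatorClass n) = {x | ∃ i, x = commutatorClass n i} :=
    Set.ext fun _ => exists_congr fun _ => eq_comm
  rwa [hgen] at key

theorem stmt17 (n : ℕ) (hn : 1 ≤ n) :
    Nonempty
      ((Subgroup.closure
          {x : ↥(Rsub n ⊓ Ssub n) ⧸
              ((⁅Rsub n, Rsub n⁆ ⊔ ⁅Ssub n, Ssub n⁆).subgroupOf (Rsub n ⊓ Ssub n)) |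
            ∃ i : Fin n, x = QuotientGroup.mk
              (⟨(agen n i)⁻¹ * (bgen n)⁻¹ * agen n i * bgen n, ab_mem n i⟩ :
                ↥(Rsub n ⊓ Ssub n))}) ≃*
        Multiplicative (Fin n → ZMod 2)) :=
  stmt17_general n
end

section
/- Let F be a free group and R, S normal subgroups of F. Then the quotient group F/γ₂(R∩S) is torsion-free, where γ₂(R∩S) = [R∩S, R∩S] is the derived subgroup of R∩S. -/
/-!
Let `N = R ⊓ S` and suppose `f ^ n ∈ ⁅N, N⁆` with `n ≠ 0`. If `f ∈ N`, this is torsion-freeness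
of the abelianization of `N`, which is free by Nielsen–Schreier. Otherwise `f` has image `g ≠ 1` in
`Q = F ⧸ N`. The Magnus representation `F → ℤ[Q]^ι ⋊ Q`, `xᵢ ↦ (eᵢ, x̄ᵢ)`, kills `⁅N, N⁆`, and
its left component `a(u)` obeys the fundamental formula of Fox calculus `∑ aᵢ(u) (x̄ᵢ - 1) = ū - 1`.
Since `f ^ n ↦ 1`, we get `(1 + g + ⋯ + g ^ (n - 1)) a(f) = 0`. Now pick `w : Q → ℤ/(ord g)` with
`w (g t) = w t + 1` and extend it linearly to `μ : ℤ[Q] → ℤ/(ord g)`. An `x` killed by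
`1 + g + ⋯ + g ^ (n - 1)` has coefficient sum zero on every coset `⟨g⟩ t`, on which
`t ↦ w (t v) - w t` is constant, so `μ (x v) = μ x`. Hence `μ` kills the left side of the
fundamental formula for `f`, whereas `μ (g - 1) = 1 ≠ 0`.
-/

open Finset MonoidAlgebra

instance IsFreeGroup.isMulTorsionFree_abelianization (K : Type*) [Group K] [IsFreeGroup K] :
    IsMulTorsionFree (Abelianization K) := by
  let X := IsFreeGroup.Generators K
  have : IsAddTorsionFree (FreeAbelianGroup X) :=
    (FreeAbelianGroup.equivFinsupp X).injective.isAddTorsionFree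
      (FreeAbelianGroup.equivFinsupp X).toAddMonoidHom
  have : IsMulTorsionFree (Abelianization (FreeGroup X)) :=
    ⟨fun _ hn _ _ h => IsAddTorsionFree.nsmul_right_injective (M := FreeAbelianGroup X) hn h⟩
  exact (MulEquiv.abelianizationCongr (IsFreeGroup.toFreeGroup K)).injective.isMulTorsionFree
    (MulEquiv.abelianizationCongr (IsFreeGroup.toFreeGroup K)).toMonoidHom

theorem IsFreeGroup.mem_commutator_of_pow_mem {K : Type*} [Group K] [IsFreeGroup K] {k : K}
    {n : ℕ} (hn : n ≠ 0) (h : k ^ n ∈ commutator K) : k ∈ commutator K := by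
  rw [← Abelianization.ker_of, MonoidHom.mem_ker] at h ⊢
  exact pow_left_injective hn (by simpa using h)

theorem Subgroup.mem_commutator_of_pow_mem_of_mem {F : Type*} [Group F] [IsFreeGroup F]
    {N : Subgroup F} {f : F} (hf : f ∈ N) {n : ℕ} (hn : n ≠ 0) (h : f ^ n ∈ ⁅N, N⁆) :
    f ∈ ⁅N, N⁆ := by
  -- `N` is itself free, by Nielsen–Schreier (`subgroupIsFreeOfIsFree`).
  rw [← map_subtype_commutator] at h ⊢
  obtain ⟨k, hk, hkf⟩ := h
  have : k = ⟨f, hf⟩ ^ n := Subtype.ext hkf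
  exact ⟨_, IsFreeGroup.mem_commutator_of_pow_mem hn (this ▸ hk), rfl⟩

section GroupRing

variable {M : Type*} [Monoid M]

theorem MonoidAlgebra.liftNC_of_mul {k R : Type*} [Semiring k] [NonUnitalNonAssocSemiring R]
    (f : k →+ R) (h : M → R) (u : M) (x : k[M]) :
    liftNC f h (of k M u * x) = liftNC f (fun t => h (u * t)) x := by
  induction x using MonoidAlgebra.induction_linear with
  | zero => simp
  | add x y hx hy => rw [mul_add, map_add, map_add, hx, hy]
  | single t r => simp [single_mul_single]

theorem MonoidAlgebra.liftNC_mul_of_sub {R : Type*} [Ring R] (w : M → R) (h : M → ℤ) (v : M)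
    (hh : ∀ t, (h t : R) = w (t * v) - w t) (x : ℤ[M]) :
    liftNC (Int.castAddHom R) w (x * of ℤ M v) - liftNC (Int.castAddHom R) w x =
      liftNC (AddMonoidHom.id ℤ) h x := by
  induction x using MonoidAlgebra.induction_linear with
  | zero => simp
  | add x y hx hy => rw [add_mul, map_add, map_add, map_add, Int.cast_add, ← hx, ← hy]; abel
  | single t r => simp [single_mul_single, hh, mul_sub]

theorem MonoidAlgebra.liftNC_eq_zero_of_geom_sum_mul_eq_zero {g : M} {h : M → ℤ}
    (hh : ∀ t, h (g * t) = h t) {n : ℕ} (hn : n ≠ 0) {x : ℤ[M]}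
    (hx : (∑ i ∈ range n, of ℤ M g ^ i) * x = 0) : liftNC (AddMonoidHom.id ℤ) h x = 0 := by
  have hpow : ∀ i : ℕ, (fun t => h (g ^ i * t)) = h := by
    intro i
    induction i with
    | zero => simp
    | succ i ih => funext t; rw [pow_succ, mul_assoc, congrFun ih, hh]
  have : liftNC (AddMonoidHom.id ℤ) h ((∑ i ∈ range n, of ℤ M g ^ i) * x) =
      n • liftNC (AddMonoidHom.id ℤ) h x := by
    simp only [sum_mul, map_sum, ← map_pow, liftNC_of_mul, hpow, sum_const, card_range]
  rw [hx, map_zero, eq_comm, smul_eq_zero] at this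
  exact this.resolve_left hn

theorem MonoidAlgebra.liftNC_mul_of_eq_of_geom_sum_mul_eq_zero {m : ℕ} {g : M}
    {w : M → ZMod m} {c : ZMod m} (hw : ∀ t, w (g * t) = w t + c) {n : ℕ} (hn : n ≠ 0)
    {x : ℤ[M]} (hx : (∑ i ∈ range n, of ℤ M g ^ i) * x = 0) (v : M) :
    liftNC (Int.castAddHom _) w (x * of ℤ M v) = liftNC (Int.castAddHom _) w x := by
  -- `t ↦ w (t * v) - w t` is `g`-invariant; lift it to `ℤ`, which is torsion-free.
  let h : M → ℤ := fun t => (w (t * v) - w t).cast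
  have hh : ∀ t, h (g * t) = h t := fun t => by
    simp only [h, mul_assoc, hw, add_sub_add_right_eq_sub]
  rw [← sub_eq_zero, liftNC_mul_of_sub w h v (fun t => ZMod.intCast_zmod_cast _),
    liftNC_eq_zero_of_geom_sum_mul_eq_zero hh hn hx, Int.cast_zero]

end GroupRing

section Fox

variable {ι Q : Type*} [Group Q]

theorem exists_zmod_orderOf_apply_mul_eq_add_one (g : Q) :
    ∃ w : Q → ZMod (orderOf g), ∀ t, w (g * t) = w t + 1 := by
  let c : Q → Q := fun t => (⟦t⟧ : Quotient (QuotientGroup.rightRel (Subgroup.zpowers g))).out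
  have hc : ∀ t, ∃ k : ℤ, g ^ k * c t = t := fun t => by
    obtain ⟨k, hk⟩ :=
      Subgroup.mem_zpowers_iff.mp (QuotientGroup.rightRel_apply.mp (Quotient.mk_out t))
    exact ⟨k, by rw [hk, inv_mul_cancel_right]⟩
  choose e he using hc
  refine ⟨fun t => e t, fun t => ?_⟩
  have hct : c t = c (g * t) := congrArg Quotient.out <| Quotient.sound <|
    QuotientGroup.rightRel_apply.mpr (by simp [Subgroup.mem_zpowers g])
  have : g ^ e (g * t) = g ^ (e t + 1) := mul_right_cancel (b := c t) <| by
    rw [add_comm, zpow_one_add, mul_assoc, hct, he, ← hct, he]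
  beta_reduce
  exact_mod_cast (ZMod.intCast_eq_intCast_iff _ _ _).mpr (zpow_eq_zpow_iff_modEq.mp this)

noncomputable def foxSum (X : ι → Q) : (ι →₀ ℤ[Q]) →ₗ[ℤ[Q]] ℤ[Q] :=
  Finsupp.linearCombination ℤ[Q] fun i => of ℤ Q (X i) - 1

theorem foxSum_ne_of_geom_sum_smul_eq_zero {g : Q} (hg : g ≠ 1) {n : ℕ}
    (hn : n ≠ 0) (X : ι → Q) {a : ι →₀ ℤ[Q]} (ha : (∑ i ∈ range n, of ℤ Q g ^ i) • a = 0) :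
    foxSum X a ≠ of ℤ Q g - 1 := by
  obtain ⟨w, hw⟩ := exists_zmod_orderOf_apply_mul_eq_add_one g
  set μ := liftNC (Int.castAddHom (ZMod (orderOf g))) w
  have hμa : μ (foxSum X a) = 0 := by
    rw [foxSum, Finsupp.linearCombination_apply, map_finsuppSum]
    refine sum_eq_zero fun i _ => ?_
    show μ (a i * _) = 0
    have hai : (∑ i ∈ range n, of ℤ Q g ^ i) * a i = 0 := by
      simpa using congrArg (· i) ha
    rw [mul_sub, mul_one, map_sub,
      liftNC_mul_of_eq_of_geom_sum_mul_eq_zero hw hn hai, sub_self]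
  have hμg : μ (of ℤ Q g - 1) = 1 := by
    simp [μ, of_apply, one_def, sub_eq_iff_eq_add', ← hw 1]
  intro h
  rw [h, hμg] at hμa
  exact hg (orderOf_eq_one_iff.mp (ZMod.one_eq_zero_iff.mp hμa))

end Fox

namespace SemidirectProduct

variable {N G : Type*} [CommGroup N] [Group G] {φ : G →* MulAut N}

theorem pow_left (x : N ⋊[φ] G) (n : ℕ) :
    (x ^ n).left = ∏ i ∈ range n, φ (x.right ^ i) x.left := by
  induction n with
  | zero => simp
  | succ n ih =>
    rw [pow_succ', mul_left, ih, map_prod, prod_range_succ']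
    simp [pow_succ', mul_comm]

theorem commutator_ker_rightHom :
    ⁅(rightHom : N ⋊[φ] G →* G).ker, (rightHom : N ⋊[φ] G →* G).ker⁆ = ⊥ := by
  rw [← range_inl_eq_ker_rightHom, MonoidHom.range_eq_map, ← Subgroup.map_commutator,
    Subgroup.commutator_eq_bot_iff_le_centralizer.mpr (fun x _ y _ => mul_comm y x),
    Subgroup.map_bot]

theorem commutator_ker_le_ker {H : Type*} [Group H] (Φ : H →* N ⋊[φ] G) :
    ⁅(rightHom.comp Φ).ker, (rightHom.comp Φ).ker⁆ ≤ Φ.ker := by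
  have hmap : (rightHom.comp Φ).ker.map Φ ≤ rightHom.ker := by
    rw [Subgroup.map_le_iff_le_comap, MonoidHom.comap_ker]
  rw [← Subgroup.map_eq_bot_iff, Subgroup.map_commutator, eq_bot_iff, ← commutator_ker_rightHom]
  exact Subgroup.commutator_mono hmap hmap

end SemidirectProduct

section Magnus

variable {ι Q : Type*} [Group Q]

variable (ι Q) in
noncomputable def mulAutFreeModule : Q →* MulAut (Multiplicative (ι →₀ ℤ[Q])) :=
  (MulAutMultiplicative _).symm.toMonoidHom.comp
    ((DistribMulAction.toAddAut ℤ[Q]ˣ _).comp (of ℤ Q).toHomUnits)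

theorem toAdd_mulAutFreeModule_apply (g : Q) (a : Multiplicative (ι →₀ ℤ[Q])) :
    (mulAutFreeModule ι Q g a).toAdd = of ℤ Q g • a.toAdd := rfl

variable (ι Q) in
abbrev MagnusGroup := Multiplicative (ι →₀ ℤ[Q]) ⋊[mulAutFreeModule ι Q] Q

theorem toAdd_pow_left (p : MagnusGroup ι Q) (n : ℕ) :
    (p ^ n).left.toAdd = (∑ i ∈ range n, of ℤ Q p.right ^ i) • p.left.toAdd := by
  rw [SemidirectProduct.pow_left, toAdd_prod, sum_smul]
  simp only [← map_pow, toAdd_mulAutFreeModule_apply]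

noncomputable def foxSubgroup (X : ι → Q) : Subgroup (MagnusGroup ι Q) where
  carrier := {p | foxSum X p.left.toAdd = of ℤ Q p.right - 1}
  one_mem' := show foxSum X 0 = of ℤ Q 1 - 1 by rw [map_zero, map_one, sub_self]
  mul_mem' {p q} hp hq :=
    show foxSum X (p.left.toAdd + of ℤ Q p.right • q.left.toAdd) =
        of ℤ Q (p.right * q.right) - 1 by
      rw [map_add, map_smul, hp.out, hq.out, map_mul, smul_eq_mul]
      noncomm_ring
  inv_mem' {p} hp :=
    show foxSum X (of ℤ Q p.right⁻¹ • -p.left.toAdd) = of ℤ Q p.right⁻¹ - 1 by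
      rw [map_smul, map_neg, hp.out, smul_eq_mul, mul_neg, mul_sub, ← map_mul, inv_mul_cancel,
        map_one, mul_one, neg_sub]

noncomputable def magnusHom {F : Type*} [Group F] [IsFreeGroup F] (π : F →* Q) :
    F →* foxSubgroup fun i => π (IsFreeGroup.of i) :=
  IsFreeGroup.lift fun i => ⟨⟨.ofAdd (Finsupp.single i 1), π (IsFreeGroup.of i)⟩,
    show foxSum _ (Finsupp.single i 1) = _ by simp [foxSum]⟩

theorem magnusHom_right {F : Type*} [Group F] [IsFreeGroup F] (π : F →* Q) (u : F) :
    (magnusHom π u).1.right = π u := by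
  have : SemidirectProduct.rightHom.comp ((foxSubgroup _).subtype.comp (magnusHom π)) = π :=
    IsFreeGroup.ext_hom fun i => by simp [magnusHom]
  exact DFunLike.congr_fun this u

theorem foxSum_magnusHom {F : Type*} [Group F] [IsFreeGroup F] (π : F →* Q) (u : F) :
    foxSum (fun i => π (IsFreeGroup.of i)) (magnusHom π u).1.left.toAdd = of ℤ Q (π u) - 1 := by
  rw [← magnusHom_right π u]
  exact (magnusHom π u).2

end Magnus

theorem Subgroup.pow_notMem_commutator_of_notMem {F : Type*} [Group F] [IsFreeGroup F]
    (N : Subgroup F) [N.Normal] {f : F} (hf : f ∉ N) {n : ℕ} (hn : n ≠ 0) : f ^ n ∉ ⁅N, N⁆ := by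
  intro hfn
  let π := QuotientGroup.mk' N
  let Φ := (foxSubgroup _).subtype.comp (magnusHom π)
  have hright : SemidirectProduct.rightHom.comp Φ = π := MonoidHom.ext (magnusHom_right π)
  have hΦ : (magnusHom π f).1 ^ n = 1 := by
    have := SemidirectProduct.commutator_ker_le_ker Φ (by rwa [hright, QuotientGroup.ker_mk'])
    rwa [MonoidHom.mem_ker, map_pow] at this
  have hσ := congrArg (fun p => p.left.toAdd) hΦ
  rw [toAdd_pow_left, magnusHom_right] at hσ
  have hπf : π f ≠ 1 := by rwa [ne_eq, QuotientGroup.mk'_apply, QuotientGroup.eq_one_iff]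
  exact foxSum_ne_of_geom_sum_smul_eq_zero hπf hn _ hσ (foxSum_magnusHom π f)

theorem Subgroup.mem_commutator_of_pow_mem {F : Type*} [Group F] [IsFreeGroup F]
    (N : Subgroup F) [N.Normal] {f : F} {n : ℕ} (hn : n ≠ 0) (h : f ^ n ∈ ⁅N, N⁆) :
    f ∈ ⁅N, N⁆ := by
  by_cases hf : f ∈ N
  · exact mem_commutator_of_pow_mem_of_mem hf hn h
  · exact absurd h (pow_notMem_commutator_of_notMem N hf hn)

theorem stmt19 (F : Type) [Group F] [IsFreeGroup F] (R S : Subgroup F)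
    [R.Normal] [S.Normal] :
    ∀ g : F ⧸ (⁅R ⊓ S, R ⊓ S⁆ : Subgroup F), g ≠ 1 → ¬IsOfFinOrder g := by
  intro x hx hfin
  obtain ⟨f, rfl⟩ := QuotientGroup.mk_surjective x
  obtain ⟨n, hn, hfn⟩ := isOfFinOrder_iff_pow_eq_one.mp hfin
  rw [ne_eq, QuotientGroup.eq_one_iff] at hx
  rw [← QuotientGroup.mk_pow, QuotientGroup.eq_one_iff] at hfn
  exact hx ((R ⊓ S).mem_commutator_of_pow_mem hn.ne' hfn)
end
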